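/- Let G be a strongly connected digraph with start vertex s and dominator tree D(s). If u and v are two distinct vertices with d^R(w) = s for w = u,v in G^R(s) and d(u) = d(v) = s in G(s), then u and v belong to a common vertex-resilient block containing s if and only if u and v lie in the same strongly connected component of G \ s. -/

import Mathlib

variable {V : Type*}

/-- Mutual reachability (strong connectivity of a pair) in the digraph `E`. -/
def SConn (E : V → V → Prop) (u v : V) : Prop :=
  Relation.ReflTransGen E u v ∧ Relation.ReflTransGen E v u

/-- The digraph obtained from `E` by deleting vertex `w` (and incident edges). -/
def delV (E : V → V → Prop) (w : V) : V → V → Prop :=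
  fun a b => E a b ∧ a ≠ w ∧ b ≠ w

/-- The digraph obtained from `E` by deleting the single edge `(a,b)`. -/
def delE (E : V → V → Prop) (a b : V) : V → V → Prop :=
  fun x y => E x y ∧ ¬(x = a ∧ y = b)

/-- `u` and `v` are vertex-resilient: they are distinct and remain strongly
connected after deletion of any single other vertex. -/
def VRes (E : V → V → Prop) (u v : V) : Prop :=
  u ≠ v ∧ ∀ w, w ≠ u → w ≠ v → SConn (delV E w) u v

/-- A vertex-resilient block: a maximal set of size ≥ 2 of pairwise
vertex-resilient vertices. -/
def IsVRBlock (E : V → V → Prop) (B : Set V) : Prop :=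
  B.Pairwise (VRes E) ∧ (∃ a ∈ B, ∃ b ∈ B, a ≠ b) ∧
    ∀ B' : Set V, B ⊆ B' → B'.Pairwise (VRes E) → B' = B

/-- `l` is (the vertex list of) a directed path from `u` to `v` in `E`. -/
def IsPathList (E : V → V → Prop) (u v : V) (l : List V) : Prop :=
  l.Chain' E ∧ l.head? = some u ∧ l.getLast? = some v

/-- The internal vertices of a path given as a vertex list. -/
def internalsL (l : List V) : List V := (l.drop 1).dropLast

/-- The edges of a path given as a vertex list. -/
def edgesOfL (l : List V) : List (V × V) := l.zip l.tail

/-- There exist two internally vertex-disjoint (simple, distinct) paths from `u` to `v`. -/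
def TwoVPaths (E : V → V → Prop) (u v : V) : Prop :=
  ∃ l₁ l₂ : List V, IsPathList E u v l₁ ∧ IsPathList E u v l₂ ∧
    l₁.Nodup ∧ l₂.Nodup ∧ l₁ ≠ l₂ ∧ ∀ x ∈ internalsL l₁, x ∉ internalsL l₂

/-- `u` and `v` are 2-vertex-connected. -/
def TwoVConn (E : V → V → Prop) (u v : V) : Prop :=
  u ≠ v ∧ TwoVPaths E u v ∧ TwoVPaths E v u

/-- There exist two edge-disjoint paths from `u` to `v`. -/
def TwoEPaths (E : V → V → Prop) (u v : V) : Prop :=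
  ∃ l₁ l₂ : List V, IsPathList E u v l₁ ∧ IsPathList E u v l₂ ∧
    ∀ e ∈ edgesOfL l₁, e ∉ edgesOfL l₂

/-- `u` and `v` are 2-edge-connected. -/
def TwoEConn (E : V → V → Prop) (u v : V) : Prop :=
  u ≠ v ∧ TwoEPaths E u v ∧ TwoEPaths E v u

/-- A 2-vertex-connected block. -/
def Is2VBlock (E : V → V → Prop) (B : Set V) : Prop :=
  B.Pairwise (TwoVConn E) ∧ (∃ a ∈ B, ∃ b ∈ B, a ≠ b) ∧
    ∀ B' : Set V, B ⊆ B' → B'.Pairwise (TwoVConn E) → B' = B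

/-- A 2-edge-connected block. -/
def Is2EBlock (E : V → V → Prop) (B : Set V) : Prop :=
  B.Pairwise (TwoEConn E) ∧ (∃ a ∈ B, ∃ b ∈ B, a ≠ b) ∧
    ∀ B' : Set V, B ⊆ B' → B'.Pairwise (TwoEConn E) → B' = B

/-- The digraph `E` is strongly connected. -/
def StronglyConn (E : V → V → Prop) : Prop :=
  ∀ u v, Relation.ReflTransGen E u v

/-- `(a,b)` is a strong bridge of the strongly connected digraph `E`. -/
def IsStrongBridge (E : V → V → Prop) (a b : V) : Prop :=
  E a b ∧ ¬ StronglyConn (delE E a b)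

/-- `u` dominates `w` in the flow graph with start vertex `s`:
every path from `s` to `w` contains `u`. -/
def DomOf (E : V → V → Prop) (s u w : V) : Prop :=
  ∀ l : List V, IsPathList E s w l → u ∈ l

/-- `d` is the immediate dominator of `w` in the flow graph with start `s`:
the proper dominator of `w` dominated by all proper dominators of `w`. -/
def IdomOf (E : V → V → Prop) (s d w : V) : Prop :=
  d ≠ w ∧ DomOf E s d w ∧ ∀ u, u ≠ w → DomOf E s u w → DomOf E s u d

/-- The block graph `F` of the digraph `E`: the bipartite undirected graph on the
vertices of `E` together with its vertex-resilient blocks, a vertex `u` being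
adjacent to a block node `B` exactly when `u ∈ B`. -/
def blockGraph (E : V → V → Prop) :
    SimpleGraph (V ⊕ {B : Set V // IsVRBlock E B}) where
  Adj a b := ∃ u B, u ∈ B.1 ∧
    ((a = Sum.inl u ∧ b = Sum.inr B) ∨ (a = Sum.inr B ∧ b = Sum.inl u))
  symm := by
    refine ⟨?_⟩
    rintro a b ⟨u, B, hm, (⟨rfl, rfl⟩ | ⟨rfl, rfl⟩)⟩
    · exact ⟨u, B, hm, Or.inr ⟨rfl, rfl⟩⟩
    · exact ⟨u, B, hm, Or.inl ⟨rfl, rfl⟩⟩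
  loopless := by
    refine ⟨?_⟩
    rintro a ⟨u, B, hm, (⟨rfl, h⟩ | ⟨rfl, h⟩)⟩ <;> simp at h

/-
Since `s` is the immediate dominator of `x` in `G(s)`, no vertex `w ∉ {s, x}` dominates `x`, so
some path from `s` to `x` avoids `w`; symmetrically in `G^R(s)` some path from `x` to `s` avoids
`w`. Hence `s` is vertex-resilient with `u` and with `v`, and for every `w ≠ s` the paths through
`s` connect `u` and `v` in `G \ w`. The only remaining deletion is that of `s` itself, which is
exactly strong connectivity of `u` and `v` in `G \ s`. A maximal pairwise vertex-resilient
superset of `{s, u, v}` (Zorn) is then the required block.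
-/

variable {E : V → V → Prop}

theorem reflTransGen_delV_of_isPathList {w a b : V} {l : List V} (hl : IsPathList E a b l)
    (hw : w ∉ l) : Relation.ReflTransGen (delV E w) a b := by
  obtain ⟨hchain, hhead, hlast⟩ := hl
  have hne : l ≠ [] := by rintro rfl; simp at hhead
  have hchain' : l.IsChain (delV E w) :=
    (List.isChain_iff_forall_rel_of_append_cons_cons.mpr fun {x y l₁ l₂} hsplit =>
      ⟨List.isChain_iff_forall_rel_of_append_cons_cons.mp hchain hsplit,
        fun h => hw (by simp [hsplit, h]), fun h => hw (by simp [hsplit, h])⟩)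
  rw [List.head?_eq_some_head hne, Option.some.injEq] at hhead
  rw [List.getLast?_eq_some_getLast hne, Option.some.injEq] at hlast
  exact hhead ▸ hlast ▸ List.relationReflTransGen_of_exists_isChain l hchain' hne

theorem IdomOf.eq_of_domOf {s x w : V} (h : IdomOf E s s x) (hdom : DomOf E s w x)
    (hwx : w ≠ x) : w = s := by
  simpa using h.2.2 w hwx hdom [s] ⟨List.isChain_singleton s, rfl, rfl⟩

theorem IdomOf.reflTransGen_delV {s x w : V} (h : IdomOf E s s x) (hws : w ≠ s) (hwx : w ≠ x) :
    Relation.ReflTransGen (delV E w) s x := by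
  have hndom : ¬ DomOf E s w x := fun hdom => hws (h.eq_of_domOf hdom hwx)
  obtain ⟨l, hl, hw⟩ : ∃ l, IsPathList E s x l ∧ w ∉ l := by
    simpa [DomOf] using hndom
  exact reflTransGen_delV_of_isPathList hl hw

theorem delV_flip (w : V) : delV (flip E) w = flip (delV E w) := by
  ext a b
  simp only [delV, flip]
  tauto

theorem IdomOf.reflTransGen_delV_of_flip {s x w : V} (h : IdomOf (flip E) s s x) (hws : w ≠ s)
    (hwx : w ≠ x) : Relation.ReflTransGen (delV E w) x s := by
  have hrev := h.reflTransGen_delV hws hwx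
  rw [delV_flip] at hrev
  exact Relation.reflTransGen_swap.mp hrev

theorem vRes_of_idomOf {s x : V} (h : IdomOf E s s x) (hR : IdomOf (flip E) s s x) :
    VRes E s x :=
  ⟨h.1, fun _ hws hwx => ⟨h.reflTransGen_delV hws hwx, hR.reflTransGen_delV_of_flip hws hwx⟩⟩

theorem SConn.symm {a b : V} (h : SConn E a b) : SConn E b a :=
  ⟨h.2, h.1⟩

theorem VRes.symm {a b : V} (h : VRes E a b) : VRes E b a :=
  ⟨h.1.symm, fun w hwb hwa => (h.2 w hwa hwb).symm⟩

instance : Std.Symm (VRes E) :=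
  ⟨fun _ _ => VRes.symm⟩

theorem isChain_iff_pairwise_of_symm {α : Type*} {r : α → α → Prop} [Std.Symm r] {s : Set α} :
    IsChain r s ↔ s.Pairwise r :=
  ⟨fun h _ ha _ hb hab => (h ha hb hab).elim id (Std.Symm.symm _ _),
    fun h _ ha _ hb hab => Or.inl (h ha hb hab)⟩

theorem exists_isVRBlock_superset {B : Set V} (hB : B.Pairwise (VRes E))
    (hnontriv : ∃ a ∈ B, ∃ b ∈ B, a ≠ b) : ∃ M, IsVRBlock E M ∧ B ⊆ M := by
  obtain ⟨M, hM, hBM⟩ := (isChain_iff_pairwise_of_symm.mpr hB).exists_maxChain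
  obtain ⟨a, ha, b, hb, hab⟩ := hnontriv
  refine ⟨M, ⟨isChain_iff_pairwise_of_symm.mp hM.1, ⟨a, hBM ha, b, hBM hb, hab⟩, ?_⟩, hBM⟩
  exact fun B' hMB' hB' => (hM.2 (isChain_iff_pairwise_of_symm.mpr hB') hMB').symm

theorem stmt12_general (E : V → V → Prop) (s : V)
    (u v : V) (huv : u ≠ v)
    (h1 : IdomOf E s s u) (h2 : IdomOf E s s v)
    (h1R : IdomOf (fun a b => E b a) s s u) (h2R : IdomOf (fun a b => E b a) s s v) :
    (∃ B : Set V, IsVRBlock E B ∧ s ∈ B ∧ u ∈ B ∧ v ∈ B) ↔ SConn (delV E s) u v := by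
  refine ⟨fun ⟨B, hB, _, huB, hvB⟩ => (hB.1 huB hvB huv).2 s h1.1 h2.1, fun hsconn => ?_⟩
  have hsu : VRes E s u := vRes_of_idomOf h1 h1R
  have hsv : VRes E s v := vRes_of_idomOf h2 h2R
  have huv' : VRes E u v := by
    refine ⟨huv, fun w hwu hwv => ?_⟩
    rcases eq_or_ne w s with rfl | hws
    · exact hsconn
    · exact ⟨(h1R.reflTransGen_delV_of_flip hws hwu).trans (h2.reflTransGen_delV hws hwv),
        (h2R.reflTransGen_delV_of_flip hws hwv).trans (h1.reflTransGen_delV hws hwu)⟩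
  have hpair : ({s, u, v} : Set V).Pairwise (VRes E) := by
    rw [Set.pairwise_insert_of_symm, Set.pairwise_pair_of_symm]
    exact ⟨fun _ => huv', by rintro x (rfl | rfl) - <;> assumption⟩
  obtain ⟨M, hM, hsub⟩ := exists_isVRBlock_superset hpair ⟨s, by simp, u, by simp, h1.1⟩
  exact ⟨M, hM, hsub (by simp), hsub (by simp), hsub (by simp)⟩

/-- if `u ≠ v` both have immediate dominator `s` in `G(s)` and in
`G^R(s)`, then `u` and `v` belong to a common vertex-resilient block containing `s`
iff `u` and `v` lie in the same strongly connected component of `G \ s`. -/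
theorem stmt12 (E : V → V → Prop) (s : V) (hsc : StronglyConn E)
    (u v : V) (huv : u ≠ v)
    (h1 : IdomOf E s s u) (h2 : IdomOf E s s v)
    (h1R : IdomOf (fun a b => E b a) s s u) (h2R : IdomOf (fun a b => E b a) s s v) :
    (∃ B : Set V, IsVRBlock E B ∧ s ∈ B ∧ u ∈ B ∧ v ∈ B) ↔ SConn (delV E s) u v :=
  stmt12_general E s u v huv h1 h2 h1R h2R
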